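/- arXiv:math/0401029 — 3 statements merged into one kernel-verified Lean document; each statement's English description precedes it below -/
import Mathlib

section
/- For every positive integer n, ∫_ℂ log((1+(n+1)|z|²)/(1+|z|²)) · (1/π) · (1+|z|²)^{-2} dA(z) = ((n+1)/n)·log(n+1) − 1. -/
open MeasureTheory Real Filter

theorem stmt_1 (n : ℕ) (hn : 0 < n) :
    ∫ z : ℂ, Real.log ((1 + (n + 1) * ‖z‖ ^ 2) / (1 + ‖z‖ ^ 2)) *
      (1 / (π * (1 + ‖z‖ ^ 2) ^ 2)) =
    ((n + 1) / n) * Real.log (n + 1) - 1 := by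
  set N : ℝ := (n : ℝ) with hNdef
  have hN : 0 < N := Nat.cast_pos.mpr hn
  -- the radial profile
  set f : ℝ → ℝ := fun r => Real.log ((1 + (N + 1) * r ^ 2) / (1 + r ^ 2)) *
      (1 / (π * (1 + r ^ 2) ^ 2)) with hf
  -- antiderivative
  set F : ℝ → ℝ := fun r => ((N + 1) / N - (1 + r ^ 2)⁻¹) *
      (Real.log (1 + (N + 1) * r ^ 2) - Real.log (1 + r ^ 2)) + (1 + r ^ 2)⁻¹ with hFdef
  set F' : ℝ → ℝ := fun r => 2 * r * (Real.log (1 + (N + 1) * r ^ 2) - Real.log (1 + r ^ 2))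
      / (1 + r ^ 2) ^ 2 with hF'def
  have hderiv : ∀ x : ℝ, HasDerivAt F (F' x) x := by
    intro x
    have e1 : (0:ℝ) < 1 + x ^ 2 := by positivity
    have e2 : (0:ℝ) < 1 + (N + 1) * x ^ 2 := by positivity
    have hx2 : HasDerivAt (fun r : ℝ => r ^ 2) (2 * x) x := by
      simpa using hasDerivAt_pow 2 x
    have h1 : HasDerivAt (fun r : ℝ => 1 + r ^ 2) (2 * x) x := hx2.const_add 1
    have h2 : HasDerivAt (fun r : ℝ => 1 + (N + 1) * r ^ 2) ((N + 1) * (2 * x)) x :=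
      (hx2.const_mul (N + 1)).const_add 1
    have hinv : HasDerivAt (fun r : ℝ => (1 + r ^ 2)⁻¹) (-(2 * x) / (1 + x ^ 2) ^ 2) x :=
      h1.inv e1.ne'
    have hlog1 : HasDerivAt (fun r : ℝ => Real.log (1 + (N + 1) * r ^ 2))
        ((N + 1) * (2 * x) / (1 + (N + 1) * x ^ 2)) x := h2.log e2.ne'
    have hlog2 : HasDerivAt (fun r : ℝ => Real.log (1 + r ^ 2))
        (2 * x / (1 + x ^ 2)) x := h1.log e1.ne'
    have hA : HasDerivAt (fun r : ℝ => (N + 1) / N - (1 + r ^ 2)⁻¹)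
        (0 - -(2 * x) / (1 + x ^ 2) ^ 2) x := (hasDerivAt_const x ((N + 1) / N)).sub hinv
    have := (hA.mul (hlog1.sub hlog2)).add hinv
    refine this.congr_deriv ?_
    rw [hF'def]
    simp only [Pi.sub_apply]
    field_simp
    ring
  have hF'nonneg : ∀ x ∈ Set.Ioi (0:ℝ), 0 ≤ F' x := by
    intro x hx
    have hx0 : 0 < x := hx
    have e1 : (0:ℝ) < 1 + x ^ 2 := by positivity
    apply div_nonneg _ (by positivity)
    apply mul_nonneg (by positivity)
    rw [sub_nonneg]
    apply Real.log_le_log e1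
    nlinarith [sq_nonneg x]
  -- limit at infinity
  have hTop : Tendsto (fun r : ℝ => 1 + r ^ 2) atTop atTop :=
    tendsto_atTop_add_const_left _ 1 (tendsto_pow_atTop two_ne_zero)
  have hinv0 : Tendsto (fun r : ℝ => (1 + r ^ 2)⁻¹) atTop (nhds 0) :=
    tendsto_inv_atTop_zero.comp hTop
  have hL : Tendsto (fun r : ℝ => Real.log (1 + (N + 1) * r ^ 2) - Real.log (1 + r ^ 2))
      atTop (nhds (Real.log (N + 1))) := by
    have key : ∀ r : ℝ, Real.log (1 + (N + 1) * r ^ 2) - Real.log (1 + r ^ 2)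
        = Real.log (N + 1 - N * (1 + r ^ 2)⁻¹) := by
      intro r
      have e1 : (0:ℝ) < 1 + r ^ 2 := by positivity
      have e2 : (0:ℝ) < 1 + (N + 1) * r ^ 2 := by positivity
      rw [← Real.log_div e2.ne' e1.ne']
      congr 1
      field_simp
      ring
    simp only [key]
    have hcont : ContinuousAt Real.log (N + 1 - N * 0) := by
      apply Real.continuousAt_log
      simp
      linarith
    have := hcont.tendsto.comp (tendsto_const_nhds.sub (hinv0.const_mul N))
    simpa [Function.comp_def] using this
  have hFlim : Tendsto F atTop (nhds (((N + 1) / N) * Real.log (N + 1))) := by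
    have h1 : Tendsto (fun r : ℝ => ((N + 1) / N - (1 + r ^ 2)⁻¹) *
        (Real.log (1 + (N + 1) * r ^ 2) - Real.log (1 + r ^ 2)) + (1 + r ^ 2)⁻¹) atTop
        (nhds (((N + 1) / N - 0) * Real.log (N + 1) + 0)) :=
      (((tendsto_const_nhds (x := (N + 1) / N)).sub hinv0).mul hL).add hinv0
    simpa using h1
  have hF0 : F 0 = 1 := by simp [hFdef]
  have key : ∫ x in Set.Ioi (0:ℝ), F' x = ((N + 1) / N) * Real.log (N + 1) - 1 := by
    rw [integral_Ioi_of_hasDerivAt_of_nonneg' (fun x _ => hderiv x) hF'nonneg hFlim, hF0]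
  -- reduce the complex integral to the radial one
  have hrad : (∫ z : ℂ, Real.log ((1 + (N + 1) * ‖z‖ ^ 2) / (1 + ‖z‖ ^ 2)) *
      (1 / (π * (1 + ‖z‖ ^ 2) ^ 2)))
      = 2 * (π * ∫ y in Set.Ioi (0:ℝ), y * f y) := by
    have : ∀ z : ℂ, Real.log ((1 + (N + 1) * ‖z‖ ^ 2) / (1 + ‖z‖ ^ 2)) *
        (1 / (π * (1 + ‖z‖ ^ 2) ^ 2)) = f ‖z‖ := by
      intro z
      simp [hf]
    simp_rw [this]
    rw [integral_fun_norm_addHaar (volume : Measure ℂ) f]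
    simp only [Complex.finrank_real_complex, Complex.volume_ball, smul_eq_mul, nsmul_eq_mul]
    norm_num
    left
    rw [measureReal_def, Complex.volume_ball]
    simp
  rw [hrad]
  have congr1 : (∫ y in Set.Ioi (0:ℝ), y * f y) = ∫ y in Set.Ioi (0:ℝ), F' y / (2 * π) := by
    apply setIntegral_congr_fun measurableSet_Ioi
    intro y hy
    have e1 : (0:ℝ) < 1 + y ^ 2 := by positivity
    have e2 : (0:ℝ) < 1 + (N + 1) * y ^ 2 := by positivity
    simp only [hf, hF'def]
    rw [← Real.log_div e2.ne' e1.ne']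
    field_simp
  rw [congr1]
  rw [integral_div, key]
  have hπ : (0:ℝ) < π := Real.pi_pos
  field_simp
end

section
/- For every positive integer n, ∫_ℂ ((3/(1+|z|²)² − (n+1)/(1+(n+1)|z|²)²) · (n/(1+(n+1)|z|²) − n/(1+|z|²))) · (1/π) dA(z) = −n − 2 + (2 + 2/n)·log(n+1). -/
section Stmt4Aux
open MeasureTheory Real Filter Set Topology

namespace Stmt4

noncomputable def F1 (n y : ℝ) : ℝ :=
  (3*(n+1)/(2*n)) * (Real.log (1+y^2) - Real.log (1+(n+1)*y^2))
    - (3/2) * (1+y^2)⁻¹ - (3*n/4) * ((1+y^2)^2)⁻¹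

noncomputable def F2 (n y : ℝ) : ℝ :=
  ((n+1)/(2*n)) * (Real.log (1+y^2) - Real.log (1+(n+1)*y^2))
    - ((n+1)/2) * (1+(n+1)*y^2)⁻¹ + (n/4) * ((1+(n+1)*y^2)^2)⁻¹

noncomputable def h1 (n y : ℝ) : ℝ := 3*n^2*y^3/((1+y^2)^3*(1+(n+1)*y^2))
noncomputable def h2 (n y : ℝ) : ℝ := (n+1)*n^2*y^3/((1+y^2)*(1+(n+1)*y^2)^3)

variable {n : ℝ}

lemma hv0 (hn : 0 < n) (y : ℝ) : 0 < 1+(n+1)*y^2 := by positivity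

lemma hasDerivAt_F1 (hn : 0 < n) (y : ℝ) : HasDerivAt (F1 n) (h1 n y) y := by
  have hu : (0:ℝ) < 1+y^2 := by positivity
  have hv : (0:ℝ) < 1+(n+1)*y^2 := hv0 hn y
  have du : HasDerivAt (fun y : ℝ => 1+y^2) (2*y) y := by
    simpa using ((hasDerivAt_pow 2 y).const_add 1)
  have dv : HasDerivAt (fun y : ℝ => 1+(n+1)*y^2) ((n+1)*(2*y)) y := by
    simpa using (((hasDerivAt_pow 2 y).const_mul (n+1)).const_add 1)
  have H := ((((du.log hu.ne').sub (dv.log hv.ne')).const_mul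
        (3*(n+1)/(2*n))).sub ((du.inv hu.ne').const_mul (3/2))).sub
      ((((du.pow 2)).inv (pow_ne_zero 2 hu.ne')).const_mul (3*n/4))
  refine H.congr_deriv ?_
  unfold h1
  simp only [Pi.pow_apply]
  field_simp
  ring

lemma hasDerivAt_F2 (hn : 0 < n) (y : ℝ) : HasDerivAt (F2 n) (h2 n y) y := by
  have hu : (0:ℝ) < 1+y^2 := by positivity
  have hv : (0:ℝ) < 1+(n+1)*y^2 := hv0 hn y
  have du : HasDerivAt (fun y : ℝ => 1+y^2) (2*y) y := by
    simpa using ((hasDerivAt_pow 2 y).const_add 1)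
  have dv : HasDerivAt (fun y : ℝ => 1+(n+1)*y^2) ((n+1)*(2*y)) y := by
    simpa using (((hasDerivAt_pow 2 y).const_mul (n+1)).const_add 1)
  have H := ((((du.log hu.ne').sub (dv.log hv.ne')).const_mul
        ((n+1)/(2*n))).sub ((dv.inv hv.ne').const_mul ((n+1)/2))).add
      ((((dv.pow 2)).inv (pow_ne_zero 2 hv.ne')).const_mul (n/4))
  refine H.congr_deriv ?_
  unfold h2
  simp only [Pi.pow_apply]
  field_simp
  ring

lemma tendsto_logdiff (hn : 0 < n) :
    Tendsto (fun y : ℝ => Real.log (1+y^2) - Real.log (1+(n+1)*y^2)) atTop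
      (𝓝 (-Real.log (n+1))) := by
  have h2 : Tendsto (fun y : ℝ => (y^2)⁻¹) atTop (𝓝 0) :=
    tendsto_inv_atTop_zero.comp (tendsto_pow_atTop two_ne_zero)
  have hA : Tendsto (fun y : ℝ => (y^2)⁻¹ + 1) atTop (𝓝 1) := by
    simpa using h2.add_const 1
  have hB : Tendsto (fun y : ℝ => (y^2)⁻¹ + (n+1)) atTop (𝓝 (n+1)) := by
    simpa using h2.add_const (n+1)
  have hlogA : Tendsto (fun y : ℝ => Real.log ((y^2)⁻¹ + 1)) atTop (𝓝 0) := by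
    simpa [Function.comp_def] using ((Real.continuousAt_log one_ne_zero).tendsto.comp hA)
  have hlogB : Tendsto (fun y : ℝ => Real.log ((y^2)⁻¹ + (n+1))) atTop
      (𝓝 (Real.log (n+1))) :=
    (Real.continuousAt_log (by positivity)).tendsto.comp hB
  have key : Tendsto (fun y : ℝ => Real.log ((y^2)⁻¹ + 1) - Real.log ((y^2)⁻¹ + (n+1)))
      atTop (𝓝 (-Real.log (n+1))) := by simpa using hlogA.sub hlogB
  refine key.congr' ?_
  filter_upwards [eventually_gt_atTop (0:ℝ)] with y hy
  have hy2 : (0:ℝ) < y^2 := by positivity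
  have e1 : (1:ℝ)+y^2 = y^2 * ((y^2)⁻¹ + 1) := by field_simp
  have e2 : (1:ℝ)+(n+1)*y^2 = y^2 * ((y^2)⁻¹ + (n+1)) := by field_simp
  rw [e1, e2, Real.log_mul hy2.ne' (by positivity), Real.log_mul hy2.ne' (by positivity)]
  ring

lemma tendsto_inv_u : Tendsto (fun y : ℝ => (1+y^2)⁻¹) atTop (𝓝 0) :=
  tendsto_inv_atTop_zero.comp
    (tendsto_atTop_add_const_left _ 1 (tendsto_pow_atTop two_ne_zero))

lemma tendsto_inv_v (hn : 0 < n) : Tendsto (fun y : ℝ => (1+(n+1)*y^2)⁻¹) atTop (𝓝 0) :=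
  tendsto_inv_atTop_zero.comp (tendsto_atTop_add_const_left _ 1
    ((tendsto_pow_atTop two_ne_zero).const_mul_atTop (by positivity)))

lemma tendsto_inv_sq {g : ℝ → ℝ} (h : Tendsto (fun y => (g y)⁻¹) atTop (𝓝 0)) :
    Tendsto (fun y : ℝ => ((g y)^2)⁻¹) atTop (𝓝 0) := by
  have := h.mul h
  simpa [mul_inv, sq] using this

lemma tendsto_F1 (hn : 0 < n) :
    Tendsto (F1 n) atTop (𝓝 (-(3*(n+1)/(2*n)) * Real.log (n+1))) := by
  have := (((tendsto_logdiff hn).const_mul (3*(n+1)/(2*n))).sub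
      (tendsto_inv_u.const_mul (3/2))).sub ((tendsto_inv_sq tendsto_inv_u).const_mul (3*n/4))
  unfold F1
  convert this using 2 <;> ring

lemma tendsto_F2 (hn : 0 < n) :
    Tendsto (F2 n) atTop (𝓝 (-((n+1)/(2*n)) * Real.log (n+1))) := by
  have := ((((tendsto_logdiff hn).const_mul ((n+1)/(2*n))).sub
      ((tendsto_inv_v hn).const_mul ((n+1)/2))).add
      ((tendsto_inv_sq (tendsto_inv_v hn)).const_mul (n/4)))
  unfold F2
  convert this using 2 <;> ring

lemma h1_nonneg (hn : 0 < n) {y : ℝ} (hy : 0 < y) : 0 ≤ h1 n y := by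
  unfold h1; positivity

lemma h2_nonneg (hn : 0 < n) {y : ℝ} (hy : 0 < y) : 0 ≤ h2 n y := by
  unfold h2; positivity

lemma integral_h1 (hn : 0 < n) :
    ∫ y in Ioi (0:ℝ), h1 n y
      = -(3*(n+1)/(2*n)) * Real.log (n+1) + 3/2 + 3*n/4 := by
  rw [integral_Ioi_of_hasDerivAt_of_nonneg' (fun y _ => hasDerivAt_F1 hn y)
    (fun y hy => h1_nonneg hn hy) (tendsto_F1 hn)]
  unfold F1
  norm_num
  ring

lemma integrable_h1 (hn : 0 < n) : IntegrableOn (h1 n) (Ioi (0:ℝ)) :=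
  integrableOn_Ioi_deriv_of_nonneg' (fun y _ => hasDerivAt_F1 hn y)
    (fun y hy => h1_nonneg hn hy) (tendsto_F1 hn)

lemma integral_h2 (hn : 0 < n) :
    ∫ y in Ioi (0:ℝ), h2 n y
      = -((n+1)/(2*n)) * Real.log (n+1) + (n+1)/2 - n/4 := by
  rw [integral_Ioi_of_hasDerivAt_of_nonneg' (fun y _ => hasDerivAt_F2 hn y)
    (fun y hy => h2_nonneg hn hy) (tendsto_F2 hn)]
  unfold F2
  norm_num
  ring

lemma integrable_h2 (hn : 0 < n) : IntegrableOn (h2 n) (Ioi (0:ℝ)) :=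
  integrableOn_Ioi_deriv_of_nonneg' (fun y _ => hasDerivAt_F2 hn y)
    (fun y hy => h2_nonneg hn hy) (tendsto_F2 hn)

end Stmt4

end Stmt4Aux

open MeasureTheory Real

theorem stmt_4 (n : ℕ) (hn : 0 < n) :
    ∫ z : ℂ, ((3 / (1 + ‖z‖ ^ 2) ^ 2
        - (n + 1) / (1 + (n + 1) * ‖z‖ ^ 2) ^ 2) *
      (n / (1 + (n + 1) * ‖z‖ ^ 2) - n / (1 + ‖z‖ ^ 2))) * (1 / π) =
    -(n : ℝ) - 2 + (2 + 2 / n) * Real.log (n + 1) := by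
  have hn' : (0:ℝ) < n := by exact_mod_cast hn
  set f : ℝ → ℝ := fun y => ((3 / (1 + y ^ 2) ^ 2
        - ((n:ℝ) + 1) / (1 + ((n:ℝ) + 1) * y ^ 2) ^ 2) *
      ((n:ℝ) / (1 + ((n:ℝ) + 1) * y ^ 2) - (n:ℝ) / (1 + y ^ 2))) * (1 / π) with hf
  have h0 : (∫ z : ℂ, ((3 / (1 + ‖z‖ ^ 2) ^ 2
        - (n + 1) / (1 + (n + 1) * ‖z‖ ^ 2) ^ 2) *
      (n / (1 + (n + 1) * ‖z‖ ^ 2) - n / (1 + ‖z‖ ^ 2))) * (1 / π))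
      = ∫ z : ℂ, f ‖z‖ := by
    congr 1
  rw [h0, MeasureTheory.integral_fun_norm_addHaar volume f, Complex.finrank_real_complex]
  have hvol : volume.real (Metric.ball (0:ℂ) 1) = π := by
    rw [measureReal_def, Complex.volume_ball]
    simp
  rw [hvol]
  have key : ∀ y : ℝ, y ^ (2-1) • f y = (Stmt4.h2 n y - Stmt4.h1 n y) * π⁻¹ := by
    intro y
    have hu : (0:ℝ) < 1+y^2 := by positivity
    have hv : (0:ℝ) < 1+((n:ℝ)+1)*y^2 := by positivity
    simp only [smul_eq_mul, hf, Stmt4.h1, Stmt4.h2]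
    norm_num
    field_simp
    ring
  simp_rw [key]
  rw [MeasureTheory.integral_mul_const,
    MeasureTheory.integral_sub (Stmt4.integrable_h2 hn') (Stmt4.integrable_h1 hn'),
    Stmt4.integral_h2 hn', Stmt4.integral_h1 hn']
  have hπ := Real.pi_ne_zero
  simp only [smul_eq_mul, nsmul_eq_mul, Nat.cast_ofNat]
  field_simp
  ring
end

section
/- For every positive integer n, ∫₀^∞ log((1+(n+1)t)/(1+t)) · (n+1)/(1+(n+1)t)² dt = 1 − log(n+1)/n. -/
open MeasureTheory Real Filter Topology

theorem stmt_15 (n : ℕ) (hn : 0 < n) :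
    ∫ t in Set.Ioi (0 : ℝ),
        Real.log ((1 + (n + 1) * t) / (1 + t)) * ((n + 1) / (1 + (n + 1) * t) ^ 2) =
      1 - Real.log (n + 1) / n := by
  have hN : (0:ℝ) < n := by exact_mod_cast hn
  have hNne : (n:ℝ) ≠ 0 := ne_of_gt hN
  set a : ℝ := (n:ℝ) + 1 with ha
  have hapos : (0:ℝ) < a := by positivity
  have hane : a ≠ 0 := ne_of_gt hapos
  set F : ℝ → ℝ := fun t =>
    (Real.log (1 + t) - Real.log (1 + a * t)) * ((1 + a * t)⁻¹ + (n:ℝ)⁻¹) - (1 + a * t)⁻¹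
    with hF
  have h1 : ∀ t : ℝ, t ∈ Set.Ici (0:ℝ) → (0:ℝ) < 1 + t := fun t ht => by
    simp only [Set.mem_Ici] at ht; linarith
  have h2 : ∀ t : ℝ, t ∈ Set.Ici (0:ℝ) → (0:ℝ) < 1 + a * t := fun t ht => by
    simp only [Set.mem_Ici] at ht; nlinarith
  have hderiv : ∀ t ∈ Set.Ici (0:ℝ), HasDerivAt F
      (Real.log ((1 + a * t) / (1 + t)) * (a / (1 + a * t) ^ 2)) t := by
    intro t ht
    have p1 := h1 t ht
    have p2 := h2 t ht
    have d1 : HasDerivAt (fun t : ℝ => Real.log (1 + t)) (1 / (1 + t)) t := by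
      simpa using (HasDerivAt.log ((hasDerivAt_id t).const_add 1) (ne_of_gt p1))
    have d2' : HasDerivAt (fun t : ℝ => 1 + a * t) a t := by
      simpa using ((hasDerivAt_id t).const_mul a).const_add 1
    have d2 : HasDerivAt (fun t : ℝ => Real.log (1 + a * t)) (a / (1 + a * t)) t :=
      d2'.log (ne_of_gt p2)
    have d3 : HasDerivAt (fun t : ℝ => (1 + a * t)⁻¹) (-a / (1 + a * t) ^ 2) t := by
      simpa [Pi.inv_def] using d2'.inv (ne_of_gt p2)
    have d4 : HasDerivAt F
        ((1 / (1 + t) - a / (1 + a * t)) * ((1 + a * t)⁻¹ + (n:ℝ)⁻¹)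
          + (Real.log (1 + t) - Real.log (1 + a * t)) * (-a / (1 + a * t) ^ 2 + 0)
          - (-a / (1 + a * t) ^ 2)) t := by
      exact ((d1.sub d2).mul (d3.add (hasDerivAt_const t _))).sub d3
    convert d4 using 1
    rw [Real.log_div (ne_of_gt p2) (ne_of_gt p1)]
    field_simp
    ring
  have hnonneg : ∀ t ∈ Set.Ioi (0:ℝ),
      0 ≤ Real.log ((1 + a * t) / (1 + t)) * (a / (1 + a * t) ^ 2) := by
    intro t ht
    have ht' : (0:ℝ) < t := ht
    have p1 : (0:ℝ) < 1 + t := by linarith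
    have p2 : (0:ℝ) < 1 + a * t := by nlinarith
    apply mul_nonneg
    · apply Real.log_nonneg
      rw [le_div_iff₀ p1]
      nlinarith
    · positivity
  have hlim : Tendsto F atTop (𝓝 (-Real.log a / n)) := by
    have hinv : Tendsto (fun t : ℝ => (1 + a * t)⁻¹) atTop (𝓝 0) := by
      apply Tendsto.inv_tendsto_atTop
      exact tendsto_atTop_add_const_left _ 1 (tendsto_id.const_mul_atTop hapos)
    have hlog : Tendsto (fun t : ℝ => Real.log (1 + t) - Real.log (1 + a * t)) atTop
        (𝓝 (-Real.log a)) := by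
      have heq : ∀ᶠ t : ℝ in atTop, Real.log ((1 + t) / (1 + a * t)) =
          Real.log (1 + t) - Real.log (1 + a * t) := by
        filter_upwards [eventually_gt_atTop (0:ℝ)] with t ht
        have p1 : (0:ℝ) < 1 + t := by linarith
        have p2 : (0:ℝ) < 1 + a * t := by nlinarith
        exact Real.log_div (ne_of_gt p1) (ne_of_gt p2)
      have hrat : Tendsto (fun t : ℝ => (1 + t) / (1 + a * t)) atTop (𝓝 a⁻¹) := by
        have heq2 : ∀ᶠ t : ℝ in atTop, (t⁻¹ + 1) / (t⁻¹ + a) = (1 + t) / (1 + a * t) := by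
          filter_upwards [eventually_gt_atTop (0:ℝ)] with t ht
          have h3 : t⁻¹ + a ≠ 0 := by positivity
          have h4 : (1:ℝ) + a * t ≠ 0 := by nlinarith
          have h5 : t ≠ 0 := ne_of_gt ht
          field_simp
        have : Tendsto (fun t : ℝ => (t⁻¹ + 1) / (t⁻¹ + a)) atTop (𝓝 ((0 + 1) / (0 + a))) := by
          apply Tendsto.div
          · exact tendsto_inv_atTop_zero.add tendsto_const_nhds
          · exact tendsto_inv_atTop_zero.add tendsto_const_nhds
          · simpa using hane
        simpa using this.congr' heq2
      have := (Real.continuousAt_log (by positivity : a⁻¹ ≠ 0)).tendsto.comp hrat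
      rw [Real.log_inv] at this
      exact Tendsto.congr' heq this
    have : Tendsto F atTop (𝓝 ((-Real.log a) * (0 + (n:ℝ)⁻¹) - 0)) :=
      (hlog.mul (hinv.add tendsto_const_nhds)).sub hinv
    simpa [div_eq_mul_inv] using this
  have key := integral_Ioi_of_hasDerivAt_of_nonneg' hderiv hnonneg hlim
  rw [key]
  have : F 0 = -1 := by simp [hF]
  rw [this, ha]
  push_cast
  ring
end
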